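/- arXiv:1310.5240 — 2 statements merged into one kernel-verified Lean document; each statement's English description precedes it below -/
import Mathlib

section
/- Suppose there exists a holey self-orthogonal latin square of order n with holes H_1, …, H_m of sizes h_1, …, h_m (which partition the index set), and for each i ∈ {1, …, m} there exists a CMDRR(h_i, k_i), where for h_i = 1 one allows the trivial CMDRR(1,1) consisting of one spouse pair and no games. Then there exists a CMDRR(n, k_1 + k_2 + ⋯ + k_m). -/
open scoped Classical

/-- A mixed doubles game: an unordered pair of teams, each team being a
(man, woman) pair, for `n` men and `n` women indexed by `Fin n`. -/
abbrev Game (n : ℕ) := Sym2 (Fin n × Fin n)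

/-- A game is valid if its two teams have distinct men and distinct women. -/
def Game.valid {n : ℕ} (g : Game n) : Prop :=
  ∃ a b : Fin n × Fin n, g = s(a, b) ∧ a.1 ≠ b.1 ∧ a.2 ≠ b.2

/-- Man `m` plays in game `g`. -/
def Game.manIn {n : ℕ} (m : Fin n) (g : Game n) : Prop :=
  ∃ a b : Fin n × Fin n, g = s(a, b) ∧ a.1 = m

/-- Woman `w` plays in game `g`. -/
def Game.womanIn {n : ℕ} (w : Fin n) (g : Game n) : Prop :=
  ∃ a b : Fin n × Fin n, g = s(a, b) ∧ a.2 = w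

/-- Man `m` and woman `w` are partners (teammates) in game `g`. -/
def Game.partners {n : ℕ} (m w : Fin n) (g : Game n) : Prop :=
  (m, w) ∈ g

/-- Man `m` and woman `w` are opponents in game `g` (on different teams). -/
def Game.opposesMW {n : ℕ} (m w : Fin n) (g : Game n) : Prop :=
  ∃ a b : Fin n × Fin n, g = s(a, b) ∧ a.1 = m ∧ b.2 = w

/-- Men `m` and `m'` are opponents in game `g`. -/
def Game.opposesMM {n : ℕ} (m m' : Fin n) (g : Game n) : Prop :=
  ∃ a b : Fin n × Fin n, g = s(a, b) ∧ a.1 = m ∧ b.1 = m'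

/-- Women `w` and `w'` are opponents in game `g`. -/
def Game.opposesWW {n : ℕ} (w w' : Fin n) (g : Game n) : Prop :=
  ∃ a b : Fin n × Fin n, g = s(a, b) ∧ a.2 = w ∧ b.2 = w'

/-- A complete mixed doubles round robin tournament CMDRR(n,k). -/
structure CMDRR (n k : ℕ) where
  /-- The spouse pairs (man, woman). -/
  spouses : Finset (Fin n × Fin n)
  spouses_card : spouses.card = k
  spouses_inj1 : ∀ p ∈ spouses, ∀ q ∈ spouses, p.1 = q.1 → p = q
  spouses_inj2 : ∀ p ∈ spouses, ∀ q ∈ spouses, p.2 = q.2 → p = q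
  /-- The multiset of games. -/
  games : Multiset (Game n)
  valid : ∀ g ∈ games, g.valid
  /-- (i) no game contains both members of a spouse pair. -/
  no_spouse_game : ∀ g ∈ games, ∀ p ∈ spouses, ¬ (Game.manIn p.1 g ∧ Game.womanIn p.2 g)
  /-- (ii) every non-spouse man-woman pair partners exactly once ... -/
  partners_once : ∀ m w : Fin n, (m, w) ∉ spouses →
    games.countP (Game.partners m w) = 1
  /-- ... and opposes exactly once. -/
  opposesMW_once : ∀ m w : Fin n, (m, w) ∉ spouses →
    games.countP (Game.opposesMW m w) = 1
  /-- (iii) a spoused man opposes every other man exactly once. -/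
  spousedM_opposes : ∀ m ∈ spouses.image Prod.fst, ∀ m' : Fin n, m' ≠ m →
    games.countP (Game.opposesMM m m') = 1
  /-- (iii) a spoused woman opposes every other woman exactly once. -/
  spousedW_opposes : ∀ w ∈ spouses.image Prod.snd, ∀ w' : Fin n, w' ≠ w →
    games.countP (Game.opposesWW w w') = 1
  /-- (iv) an unspoused man opposes exactly one other unspoused man exactly twice,
  and all other men exactly once. -/
  unspousedM_opposes : ∀ m : Fin n, m ∉ spouses.image Prod.fst →
    ∃ m' : Fin n, m' ≠ m ∧ m' ∉ spouses.image Prod.fst ∧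
      games.countP (Game.opposesMM m m') = 2 ∧
      ∀ m'' : Fin n, m'' ≠ m → m'' ≠ m' → games.countP (Game.opposesMM m m'') = 1
  /-- (iv) likewise for unspoused women. -/
  unspousedW_opposes : ∀ w : Fin n, w ∉ spouses.image Prod.snd →
    ∃ w' : Fin n, w' ≠ w ∧ w' ∉ spouses.image Prod.snd ∧
      games.countP (Game.opposesWW w w') = 2 ∧
      ∀ w'' : Fin n, w'' ≠ w → w'' ≠ w' → games.countP (Game.opposesWW w w'') = 1

/-- A round: a multiset of games in which each player appears at most once. -/
def IsRound {n : ℕ} (r : Multiset (Game n)) : Prop :=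
  (∀ m : Fin n, r.countP (Game.manIn m) ≤ 1) ∧
  (∀ w : Fin n, r.countP (Game.womanIn w) ≤ 1)

/-- A full round: all players play if `n` is even; all but exactly one man and
one woman play if `n` is odd. -/
def FullRound {n : ℕ} (r : Multiset (Game n)) : Prop :=
  IsRound r ∧
  ((Even n ∧ (∀ m : Fin n, r.countP (Game.manIn m) = 1) ∧
      (∀ w : Fin n, r.countP (Game.womanIn w) = 1)) ∨
   (¬ Even n ∧ (∃! m : Fin n, r.countP (Game.manIn m) = 0) ∧
      (∃! w : Fin n, r.countP (Game.womanIn w) = 0)))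

/-- A holey self-orthogonal latin square of order `n`, whose holes are the
(nonempty) fibers of `hole : Fin n → Fin m`.  The array is (morally) defined
exactly on cells `(i, j)` with `hole i ≠ hole j`; we use a total function,
with all conditions quantified only over such cells. -/
structure HSOLS (n m : ℕ) (hole : Fin n → Fin m) where
  L : Fin n → Fin n → Fin n
  /-- each row `i` contains every symbol not in the hole of `i` exactly once -/
  row_once : ∀ i s : Fin n, hole s ≠ hole i →
    ∃! j : Fin n, hole j ≠ hole i ∧ L i j = s
  /-- and no symbol from the hole of `i`. -/
  row_no_hole : ∀ i j : Fin n, hole j ≠ hole i → hole (L i j) ≠ hole i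
  /-- each column `j` contains every symbol not in the hole of `j` exactly once -/
  col_once : ∀ j s : Fin n, hole s ≠ hole j →
    ∃! i : Fin n, hole i ≠ hole j ∧ L i j = s
  /-- and no symbol from the hole of `j`. -/
  col_no_hole : ∀ i j : Fin n, hole i ≠ hole j → hole (L i j) ≠ hole j
  /-- self-orthogonality: superimposing `L` with its transpose, the ordered
  pairs `(L i j, L j i)` over defined cells are exactly the ordered pairs of
  symbols from different holes, each exactly once. -/
  orth : ∀ s t : Fin n, hole s ≠ hole t →
    ∃! p : Fin n × Fin n, hole p.1 ≠ hole p.2 ∧ L p.1 p.2 = s ∧ L p.2 p.1 = t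

/-!
The filled tournament consists of the games of each ingredient CMDRR, relabelled into its hole,
together with one game `(a, L a b)` against `(b, L b a)` for every unordered pair of players
`a, b` from different holes. Among these cross games, man `a` partners woman `w` exactly when
`L a b = w` (rows are latin) and opposes her exactly when `L b a = w` (columns are latin); two men
from different holes meet exactly in their own cell, and two women `w, w'` from different holes
meet exactly in the cell with `(L a b, L b a) = (w, w')` (self-orthogonality). As `L a b` avoids the
holes of `a` and `b`, and `L a b`, `L b a` lie in different holes, no cross game relates two
players of the same hole, so inside each hole every count is that of the ingredient.
-/

theorem Finset.mem_of_subset_image_self {α : Type*} [DecidableEq α] {s : Finset α}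
    {f : α → α} (h : s ⊆ s.image f) {a : α} (ha : a ∈ s) : f a ∈ s := by
  rw [Finset.eq_of_subset_of_card_le h Finset.card_image_le]
  exact Finset.mem_image_of_mem f ha

theorem Sym2.exists_mk_eq_mk_and_iff {α : Type*} (R : α → α → Prop) (x y : α) :
    (∃ a b, s(x, y) = s(a, b) ∧ R a b) ↔ R x y ∨ R y x := by
  constructor
  · rintro ⟨a, b, h, hR⟩
    rcases Sym2.eq_iff.mp h with ⟨rfl, rfl⟩ | ⟨rfl, rfl⟩
    exacts [Or.inl hR, Or.inr hR]
  · rintro (hR | hR)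
    exacts [⟨x, y, rfl, hR⟩, ⟨y, x, Sym2.eq_swap, hR⟩]

theorem Sym2.exists_map_eq_mk_and_iff {α β : Type*} (F : α → β) (R : β → β → Prop)
    (z : Sym2 α) :
    (∃ a b, z.map F = s(a, b) ∧ R a b) ↔ ∃ a b, z = s(a, b) ∧ R (F a) (F b) := by
  induction z using Sym2.ind with
  | _ x y =>
    rw [Sym2.map_mk, Sym2.exists_mk_eq_mk_and_iff,
      Sym2.exists_mk_eq_mk_and_iff (fun a b => R (F a) (F b))]

namespace Game

variable {n k : ℕ}

theorem manIn_and_womanIn_iff {m w : Fin n} {g : Game n} :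
    manIn m g ∧ womanIn w g ↔ partners m w g ∨ opposesMW m w g := by
  induction g using Sym2.ind with
  | _ a b =>
    simp only [manIn, womanIn, partners, opposesMW, Sym2.mem_iff,
      Sym2.exists_mk_eq_mk_and_iff, Prod.ext_iff]
    tauto

def map (f : Fin k → Fin n) (g : Game k) : Game n :=
  Sym2.map (Prod.map f f) g

theorem valid.map {g : Game k} (hg : g.valid) {f : Fin k → Fin n}
    (hf : Function.Injective f) : (g.map f).valid := by
  obtain ⟨a, b, rfl, h1, h2⟩ := hg
  exact ⟨Prod.map f f a, Prod.map f f b, rfl, hf.ne h1, hf.ne h2⟩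

def IsNatural (Q : ∀ {k : ℕ}, Fin k → Fin k → Game k → Prop) : Prop :=
  ∀ {k n : ℕ} (f : Fin k ↪ Fin n) (x y : Fin n) (g : Game k),
    Q x y (g.map f) ↔ ∃ x' y', f x' = x ∧ f y' = y ∧ Q x' y' g

theorem isNatural_partners : IsNatural @partners := by
  intro k n f x y g
  simp only [partners, map, Sym2.mem_map, Prod.exists, Prod.map, Prod.mk.injEq]
  aesop

theorem isNatural_opposesMW : IsNatural @opposesMW := by
  intro k n f x y g
  simp only [opposesMW, map, Sym2.exists_map_eq_mk_and_iff, Prod.map]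
  aesop

theorem isNatural_opposesMM : IsNatural @opposesMM := by
  intro k n f x y g
  simp only [opposesMM, map, Sym2.exists_map_eq_mk_and_iff, Prod.map]
  aesop

theorem isNatural_opposesWW : IsNatural @opposesWW := by
  intro k n f x y g
  simp only [opposesWW, map, Sym2.exists_map_eq_mk_and_iff, Prod.map]
  aesop

theorem IsNatural.map_iff {Q : ∀ {k : ℕ}, Fin k → Fin k → Game k → Prop}
    (hQ : IsNatural Q) {k n : ℕ} (f : Fin k ↪ Fin n) {x y : Fin k} {g : Game k} :
    Q (f x) (f y) (g.map f) ↔ Q x y g := by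
  refine (hQ f (f x) (f y) g).trans ?_
  simp only [f.injective.eq_iff]
  exact ⟨fun ⟨_, _, rfl, rfl, h⟩ => h, fun h => ⟨x, y, rfl, rfl, h⟩⟩

end Game

theorem CMDRR.countP_partners_eq_zero {n k : ℕ} (T : CMDRR n k) {p : Fin n × Fin n}
    (hp : p ∈ T.spouses) : T.games.countP (Game.partners p.1 p.2) = 0 :=
  Multiset.countP_eq_zero.mpr fun g hg h =>
    T.no_spouse_game g hg p hp (Game.manIn_and_womanIn_iff.mpr (.inl h))

theorem CMDRR.countP_opposesMW_eq_zero {n k : ℕ} (T : CMDRR n k) {p : Fin n × Fin n}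
    (hp : p ∈ T.spouses) : T.games.countP (Game.opposesMW p.1 p.2) = 0 :=
  Multiset.countP_eq_zero.mpr fun g hg h =>
    T.no_spouse_game g hg p hp (Game.manIn_and_womanIn_iff.mpr (.inr h))

section Holes

variable {n m : ℕ} (hole : Fin n → Fin m)

abbrev holeSize (i : Fin m) : ℕ :=
  (Finset.univ.filter fun x : Fin n => hole x = i).card

noncomputable def holeEmb (i : Fin m) : Fin (holeSize hole i) ↪ Fin n :=
  (Fintype.equivFinOfCardEq (Fintype.card_subtype _)).symm.toEmbedding.trans
    (Function.Embedding.subtype _)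

variable {hole}

theorem hole_holeEmb {i : Fin m} (x : Fin (holeSize hole i)) : hole (holeEmb hole i x) = i :=
  ((Fintype.equivFinOfCardEq (Fintype.card_subtype _)).symm x).2

theorem exists_holeEmb_eq {i : Fin m} {x : Fin n} (hx : hole x = i) :
    ∃ x', holeEmb hole i x' = x :=
  ⟨Fintype.equivFinOfCardEq (Fintype.card_subtype _) ⟨x, hx⟩, by simp [holeEmb]⟩

theorem eq_of_holeEmb_eq {i j : Fin m} {x : Fin (holeSize hole i)} {y : Fin (holeSize hole j)}
    (h : holeEmb hole i x = holeEmb hole j y) : i = j := by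
  simpa only [hole_holeEmb] using congrArg hole h

theorem exists_eq_holeEmb (x : Fin n) :
    ∃ i x', holeEmb hole i x' = x :=
  ⟨hole x, exists_holeEmb_eq rfl⟩

end Holes

namespace HSOLS

variable {n m : ℕ} {hole : Fin n → Fin m} (H : HSOLS n m hole)

theorem hole_L_ne_hole_L_swap {a b : Fin n} (hab : hole a ≠ hole b) :
    hole (H.L a b) ≠ hole (H.L b a) := by
  -- By self-orthogonality `p ↦ (L p, Lᵀ p)` maps the finite set of off-hole cells onto itself,
  -- hence into itself.
  let S : Finset (Fin n × Fin n) := Finset.univ.filter fun p => hole p.1 ≠ hole p.2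
  have hS : S ⊆ S.image fun p => (H.L p.1 p.2, H.L p.2 p.1) := by
    intro t ht
    obtain ⟨p, ⟨hp, h1, h2⟩, -⟩ := H.orth t.1 t.2 (Finset.mem_filter.mp ht).2
    exact Finset.mem_image.mpr ⟨p, Finset.mem_filter.mpr ⟨Finset.mem_univ _, hp⟩, Prod.ext h1 h2⟩
  exact (Finset.mem_filter.mp (Finset.mem_of_subset_image_self hS
    (Finset.mem_filter.mpr ⟨Finset.mem_univ (a, b), hab⟩))).2

def crossGame (a b : Fin n) : Game n :=
  s((a, H.L a b), (b, H.L b a))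

theorem crossGame_valid {a b : Fin n} (hab : hole a ≠ hole b) : (H.crossGame a b).valid :=
  ⟨_, _, rfl, fun h => hab (congrArg hole h),
    fun h => H.hole_L_ne_hole_L_swap hab (congrArg hole h)⟩

def crossGames : Multiset (Game n) :=
  ((Finset.univ.filter fun p : Fin n × Fin n => p.1 < p.2 ∧ hole p.1 ≠ hole p.2).val.map
    fun p => H.crossGame p.1 p.2)

theorem countP_crossGames_eq_zero {P : Game n → Prop}
    (h : ∀ a b, hole a ≠ hole b → ¬ P (H.crossGame a b)) :
    H.crossGames.countP P = 0 :=
  Multiset.countP_eq_zero.mpr fun g hg => by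
    obtain ⟨p, hp, rfl⟩ := Multiset.mem_map.mp hg
    exact h p.1 p.2 (Finset.mem_filter.mp hp).2.2

theorem countP_crossGames_eq_one {P : Game n → Prop} {a b : Fin n} (hab : hole a ≠ hole b)
    (h : ∀ c d, hole c ≠ hole d → (P (H.crossGame c d) ↔ c = a ∧ d = b ∨ c = b ∧ d = a)) :
    H.crossGames.countP P = 1 := by
  wlog hlt : a < b generalizing a b
  · exact this (Ne.symm hab) (fun c d hcd => (h c d hcd).trans or_comm)
      (lt_of_le_of_ne (not_lt.mp hlt) fun e => hab (e ▸ rfl))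
  rw [crossGames, Multiset.countP_map, ← Finset.filter_val, Finset.filter_filter]
  refine (congrArg Finset.card (Finset.eq_singleton_iff_unique_mem.mpr ⟨?_, ?_⟩)).trans
    (Finset.card_singleton (a, b))
  · exact Finset.mem_filter.mpr ⟨Finset.mem_univ _, ⟨hlt, hab⟩, (h a b hab).mpr (.inl ⟨rfl, rfl⟩)⟩
  · rintro ⟨c, d⟩ hcd
    obtain ⟨-, ⟨hlt', hcd⟩, hP⟩ := Finset.mem_filter.mp hcd
    rcases (h c d hcd).mp hP with ⟨rfl, rfl⟩ | ⟨rfl, rfl⟩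
    · rfl
    · exact absurd hlt (not_lt.mpr hlt'.le)

theorem countP_crossGames_partners (x y : Fin n) :
    H.crossGames.countP (Game.partners x y) = if hole x = hole y then 0 else 1 := by
  split_ifs with hxy
  · refine H.countP_crossGames_eq_zero fun a b hab hP => ?_
    rcases Sym2.mem_iff.mp hP with h | h <;> simp only [Prod.mk.injEq] at h <;>
      obtain ⟨rfl, rfl⟩ := h
    exacts [H.row_no_hole _ _ (Ne.symm hab) hxy.symm, H.row_no_hole _ _ hab hxy.symm]
  · obtain ⟨z, ⟨hz, rfl⟩, huniq⟩ := H.row_once x y (Ne.symm hxy)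
    refine H.countP_crossGames_eq_one (Ne.symm hz) fun c d hcd => ?_
    simp only [crossGame, Game.partners, Sym2.mem_iff, Prod.ext_iff]
    constructor
    · rintro (⟨rfl, h⟩ | ⟨rfl, h⟩)
      exacts [.inl ⟨rfl, huniq d ⟨Ne.symm hcd, h.symm⟩⟩, .inr ⟨huniq c ⟨hcd, h.symm⟩, rfl⟩]
    · rintro (⟨rfl, rfl⟩ | ⟨rfl, rfl⟩) <;> simp

theorem countP_crossGames_opposesMW (x y : Fin n) :
    H.crossGames.countP (Game.opposesMW x y) = if hole x = hole y then 0 else 1 := by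
  split_ifs with hxy
  · refine H.countP_crossGames_eq_zero fun a b hab hP => ?_
    rcases (Sym2.exists_mk_eq_mk_and_iff _ _ _).mp hP with ⟨rfl, rfl⟩ | ⟨rfl, rfl⟩
    exacts [H.col_no_hole _ _ (Ne.symm hab) hxy.symm, H.col_no_hole _ _ hab hxy.symm]
  · obtain ⟨z, ⟨hz, rfl⟩, huniq⟩ := H.col_once x y (Ne.symm hxy)
    refine H.countP_crossGames_eq_one (Ne.symm hz) fun c d hcd => ?_
    refine (Sym2.exists_mk_eq_mk_and_iff _ _ _).trans ⟨?_, ?_⟩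
    · rintro (⟨rfl, h⟩ | ⟨rfl, h⟩)
      exacts [.inl ⟨rfl, huniq d ⟨Ne.symm hcd, h⟩⟩, .inr ⟨huniq c ⟨hcd, h⟩, rfl⟩]
    · rintro (⟨rfl, rfl⟩ | ⟨rfl, rfl⟩)
      exacts [.inl ⟨rfl, rfl⟩, .inr ⟨rfl, rfl⟩]

theorem countP_crossGames_opposesMM (x y : Fin n) :
    H.crossGames.countP (Game.opposesMM x y) = if hole x = hole y then 0 else 1 := by
  split_ifs with hxy
  · refine H.countP_crossGames_eq_zero fun a b hab hP => ?_
    rcases (Sym2.exists_mk_eq_mk_and_iff _ _ _).mp hP with ⟨rfl, rfl⟩ | ⟨rfl, rfl⟩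
    exacts [hab hxy, hab hxy.symm]
  · refine H.countP_crossGames_eq_one hxy fun c d hcd => ?_
    exact (Sym2.exists_mk_eq_mk_and_iff _ _ _).trans (or_congr Iff.rfl and_comm)

theorem countP_crossGames_opposesWW (x y : Fin n) :
    H.crossGames.countP (Game.opposesWW x y) = if hole x = hole y then 0 else 1 := by
  split_ifs with hxy
  · refine H.countP_crossGames_eq_zero fun a b hab hP => ?_
    rcases (Sym2.exists_mk_eq_mk_and_iff _ _ _).mp hP with ⟨rfl, rfl⟩ | ⟨rfl, rfl⟩
    exacts [H.hole_L_ne_hole_L_swap hab hxy, H.hole_L_ne_hole_L_swap hab hxy.symm]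
  · obtain ⟨⟨a, b⟩, ⟨hab, rfl, rfl⟩, huniq⟩ := H.orth x y hxy
    refine H.countP_crossGames_eq_one hab fun c d hcd => ?_
    refine (Sym2.exists_mk_eq_mk_and_iff _ _ _).trans ⟨?_, ?_⟩
    · rintro (⟨h1, h2⟩ | ⟨h1, h2⟩)
      · exact .inl (Prod.ext_iff.mp (huniq (c, d) ⟨hcd, h1, h2⟩))
      · exact .inr (and_comm.mp (Prod.ext_iff.mp (huniq (d, c) ⟨Ne.symm hcd, h1, h2⟩)))
    · rintro (⟨rfl, rfl⟩ | ⟨rfl, rfl⟩)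
      exacts [.inl ⟨rfl, rfl⟩, .inr ⟨rfl, rfl⟩]

end HSOLS

section Fill

variable {n m : ℕ} {hole : Fin n → Fin m} {k : Fin m → ℕ}
  (C : ∀ i, CMDRR (holeSize hole i) (k i))

noncomputable def holeGames : Multiset (Game n) :=
  ∑ i, (C i).games.map (Game.map (holeEmb hole i))

variable {Q : ∀ {k : ℕ}, Fin k → Fin k → Game k → Prop}

theorem countP_holeGames_of_hole_ne (hQ : Game.IsNatural Q) {x y : Fin n}
    (hxy : hole x ≠ hole y) : (holeGames C).countP (Q x y) = 0 := by
  refine Multiset.countP_eq_zero.mpr fun g hg hQg => hxy ?_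
  obtain ⟨i, -, hg⟩ := Multiset.mem_sum.mp hg
  obtain ⟨g, -, rfl⟩ := Multiset.mem_map.mp hg
  obtain ⟨x, y, rfl, rfl, -⟩ := (hQ _ _ _ _).mp hQg
  rw [hole_holeEmb x, hole_holeEmb y]

theorem countP_holeGames_holeEmb (hQ : Game.IsNatural Q) (i : Fin m)
    (x y : Fin (holeSize hole i)) :
    (holeGames C).countP (Q (holeEmb hole i x) (holeEmb hole i y)) =
      (C i).games.countP (Q x y) := by
  rw [holeGames, ← Multiset.coe_countPAddMonoidHom, map_sum, Finset.sum_eq_single i]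
  · rw [Multiset.coe_countPAddMonoidHom, Multiset.countP_map, ← Multiset.countP_eq_card_filter]
    exact Multiset.countP_congr rfl fun g _ => propext (hQ.map_iff _)
  · intro j _ hji
    refine Multiset.countP_eq_zero.mpr fun g hg hQg => hji ?_
    obtain ⟨g, -, rfl⟩ := Multiset.mem_map.mp hg
    obtain ⟨x', -, hx', -⟩ := (hQ _ _ _ _).mp hQg
    exact eq_of_holeEmb_eq hx'
  · exact fun h => absurd (Finset.mem_univ i) h

variable (H : HSOLS n m hole)

noncomputable def fillGames : Multiset (Game n) :=
  H.crossGames + holeGames C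

variable {C H}

theorem countP_fillGames_of_hole_ne (hQ : Game.IsNatural Q)
    (hcross : ∀ x y, H.crossGames.countP (Q x y) = if hole x = hole y then 0 else 1)
    {x y : Fin n} (hxy : hole x ≠ hole y) : (fillGames C H).countP (Q x y) = 1 := by
  rw [fillGames, Multiset.countP_add, hcross, if_neg hxy, countP_holeGames_of_hole_ne C hQ hxy]

theorem countP_fillGames_holeEmb (hQ : Game.IsNatural Q)
    (hcross : ∀ x y, H.crossGames.countP (Q x y) = if hole x = hole y then 0 else 1)
    (i : Fin m) (x y : Fin (holeSize hole i)) :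
    (fillGames C H).countP (Q (holeEmb hole i x) (holeEmb hole i y)) =
      (C i).games.countP (Q x y) := by
  rw [fillGames, Multiset.countP_add, hcross, hole_holeEmb x, hole_holeEmb y, if_pos rfl,
    countP_holeGames_holeEmb C hQ, zero_add]

end Fill

section FillSpouses

variable {n m : ℕ} {hole : Fin n → Fin m} {k : Fin m → ℕ}
  (C : ∀ i, CMDRR (holeSize hole i) (k i))

noncomputable def fillSpouses : Finset (Fin n × Fin n) :=
  Finset.univ.biUnion fun i => (C i).spouses.map ((holeEmb hole i).prodMap (holeEmb hole i))

variable {C}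

theorem mem_fillSpouses {p : Fin n × Fin n} :
    p ∈ fillSpouses C ↔
      ∃ i, ∃ q ∈ (C i).spouses, (holeEmb hole i q.1, holeEmb hole i q.2) = p := by
  simp [fillSpouses]

theorem holeEmb_mem_fillSpouses {i : Fin m} {x y : Fin (holeSize hole i)} :
    (holeEmb hole i x, holeEmb hole i y) ∈ fillSpouses C ↔ (x, y) ∈ (C i).spouses := by
  refine mem_fillSpouses.trans ⟨?_, fun h => ⟨i, _, h, rfl⟩⟩
  rintro ⟨j, ⟨x', y'⟩, h, he⟩
  obtain rfl := eq_of_holeEmb_eq (Prod.ext_iff.mp he).1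
  simp only [Prod.mk.injEq, (holeEmb hole j).injective.eq_iff] at he
  rwa [← he.1, ← he.2]

theorem holeEmb_mem_image_fst_fillSpouses {i : Fin m} {x : Fin (holeSize hole i)} :
    holeEmb hole i x ∈ (fillSpouses C).image Prod.fst ↔ x ∈ (C i).spouses.image Prod.fst := by
  simp only [Finset.mem_image, mem_fillSpouses]
  constructor
  · rintro ⟨-, ⟨j, q, hq, rfl⟩, he⟩
    obtain rfl := eq_of_holeEmb_eq he
    exact ⟨q, hq, (holeEmb hole j).injective he⟩
  · rintro ⟨q, hq, rfl⟩
    exact ⟨_, ⟨i, q, hq, rfl⟩, rfl⟩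

theorem holeEmb_mem_image_snd_fillSpouses {i : Fin m} {x : Fin (holeSize hole i)} :
    holeEmb hole i x ∈ (fillSpouses C).image Prod.snd ↔ x ∈ (C i).spouses.image Prod.snd := by
  simp only [Finset.mem_image, mem_fillSpouses]
  constructor
  · rintro ⟨-, ⟨j, q, hq, rfl⟩, he⟩
    obtain rfl := eq_of_holeEmb_eq he
    exact ⟨q, hq, (holeEmb hole j).injective he⟩
  · rintro ⟨q, hq, rfl⟩
    exact ⟨_, ⟨i, q, hq, rfl⟩, rfl⟩

theorem card_fillSpouses : (fillSpouses C).card = ∑ i, k i := by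
  rw [fillSpouses, Finset.card_biUnion]
  · simp only [Finset.card_map, CMDRR.spouses_card]
  · intro i _ j _ hij
    refine Finset.disjoint_left.mpr fun p hi hj => hij ?_
    obtain ⟨q, -, rfl⟩ := Finset.mem_map.mp hi
    obtain ⟨r, -, he⟩ := Finset.mem_map.mp hj
    exact (eq_of_holeEmb_eq (Prod.ext_iff.mp he).1).symm

theorem fillSpouses_inj_fst {p q : Fin n × Fin n} (hp : p ∈ fillSpouses C)
    (hq : q ∈ fillSpouses C) (h : p.1 = q.1) : p = q := by
  obtain ⟨i, a, ha, rfl⟩ := mem_fillSpouses.mp hp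
  obtain ⟨j, b, hb, rfl⟩ := mem_fillSpouses.mp hq
  obtain rfl := eq_of_holeEmb_eq h
  rw [(C i).spouses_inj1 a ha b hb ((holeEmb hole i).injective h)]

theorem fillSpouses_inj_snd {p q : Fin n × Fin n} (hp : p ∈ fillSpouses C)
    (hq : q ∈ fillSpouses C) (h : p.2 = q.2) : p = q := by
  obtain ⟨i, a, ha, rfl⟩ := mem_fillSpouses.mp hp
  obtain ⟨j, b, hb, rfl⟩ := mem_fillSpouses.mp hq
  obtain rfl := eq_of_holeEmb_eq h
  rw [(C i).spouses_inj2 a ha b hb ((holeEmb hole i).injective h)]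

end FillSpouses

section FillCounts

variable {n m : ℕ} {hole : Fin n → Fin m} {k : Fin m → ℕ}
  {C : ∀ i, CMDRR (holeSize hole i) (k i)} {H : HSOLS n m hole}
  {Q : ∀ {k : ℕ}, Fin k → Fin k → Game k → Prop}

theorem countP_fillGames_holeEmb_eq_one (hQ : Game.IsNatural Q)
    (hcross : ∀ x y, H.crossGames.countP (Q x y) = if hole x = hole y then 0 else 1)
    {i : Fin m} {x : Fin (holeSize hole i)} {y : Fin n}
    (h : ∀ y', holeEmb hole i y' = y → (C i).games.countP (Q x y') = 1) :
    (fillGames C H).countP (Q (holeEmb hole i x) y) = 1 := by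
  by_cases hy : hole y = i
  · obtain ⟨y', rfl⟩ := exists_holeEmb_eq hy
    rw [countP_fillGames_holeEmb hQ hcross, h y' rfl]
  · exact countP_fillGames_of_hole_ne hQ hcross (by rw [hole_holeEmb x]; exact Ne.symm hy)

theorem countP_fillGames_eq_one_of_not_mem_fillSpouses (hQ : Game.IsNatural Q)
    (hcross : ∀ x y, H.crossGames.countP (Q x y) = if hole x = hole y then 0 else 1)
    (hC : ∀ i x y, (x, y) ∉ (C i).spouses → (C i).games.countP (Q x y) = 1)
    (x y : Fin n) (hxy : (x, y) ∉ fillSpouses C) : (fillGames C H).countP (Q x y) = 1 := by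
  obtain ⟨i, x, rfl⟩ := exists_eq_holeEmb (hole := hole) x
  exact countP_fillGames_holeEmb_eq_one hQ hcross fun y' hy' =>
    hC i x y' fun h => hxy (hy' ▸ holeEmb_mem_fillSpouses.mpr h)

theorem countP_fillGames_eq_zero_of_mem_fillSpouses (hQ : Game.IsNatural Q)
    (hcross : ∀ x y, H.crossGames.countP (Q x y) = if hole x = hole y then 0 else 1)
    (hC : ∀ i, ∀ p ∈ (C i).spouses, (C i).games.countP (Q p.1 p.2) = 0)
    {p : Fin n × Fin n} (hp : p ∈ fillSpouses C) : (fillGames C H).countP (Q p.1 p.2) = 0 := by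
  obtain ⟨i, q, hq, rfl⟩ := mem_fillSpouses.mp hp
  rw [countP_fillGames_holeEmb hQ hcross, hC i q hq]

variable {S : Finset (Fin n)} {T : ∀ i, Finset (Fin (holeSize hole i))}

theorem countP_fillGames_eq_one_of_mem (hQ : Game.IsNatural Q)
    (hcross : ∀ x y, H.crossGames.countP (Q x y) = if hole x = hole y then 0 else 1)
    (hS : ∀ i x, holeEmb hole i x ∈ S ↔ x ∈ T i)
    (hC : ∀ i, ∀ x ∈ T i, ∀ y, y ≠ x → (C i).games.countP (Q x y) = 1) :
    ∀ x ∈ S, ∀ y, y ≠ x → (fillGames C H).countP (Q x y) = 1 := by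
  intro x hx y hyx
  obtain ⟨i, x, rfl⟩ := exists_eq_holeEmb (hole := hole) x
  exact countP_fillGames_holeEmb_eq_one hQ hcross fun y' hy' =>
    hC i x ((hS i x).mp hx) y' fun h => hyx (h ▸ hy'.symm)

theorem exists_countP_fillGames_eq_two_of_not_mem (hQ : Game.IsNatural Q)
    (hcross : ∀ x y, H.crossGames.countP (Q x y) = if hole x = hole y then 0 else 1)
    (hS : ∀ i x, holeEmb hole i x ∈ S ↔ x ∈ T i)
    (hC : ∀ i x, x ∉ T i → ∃ x', x' ≠ x ∧ x' ∉ T i ∧ (C i).games.countP (Q x x') = 2 ∧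
      ∀ y, y ≠ x → y ≠ x' → (C i).games.countP (Q x y) = 1) :
    ∀ x, x ∉ S → ∃ x', x' ≠ x ∧ x' ∉ S ∧ (fillGames C H).countP (Q x x') = 2 ∧
      ∀ y, y ≠ x → y ≠ x' → (fillGames C H).countP (Q x y) = 1 := by
  intro x hx
  obtain ⟨i, x, rfl⟩ := exists_eq_holeEmb (hole := hole) x
  obtain ⟨x', hx'x, hx', htwo, hone⟩ := hC i x (mt (hS i x).mpr hx)
  refine ⟨holeEmb hole i x', (holeEmb hole i).injective.ne hx'x, mt (hS i x').mp hx', ?_, ?_⟩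
  · rw [countP_fillGames_holeEmb hQ hcross, htwo]
  · intro y hyx hyx'
    exact countP_fillGames_holeEmb_eq_one hQ hcross fun y' hy' =>
      hone y' (fun h => hyx (h ▸ hy'.symm)) fun h => hyx' (h ▸ hy'.symm)

end FillCounts

noncomputable def CMDRR.fill {n m : ℕ} {hole : Fin n → Fin m} (H : HSOLS n m hole)
    {k : Fin m → ℕ} (C : ∀ i, CMDRR (holeSize hole i) (k i)) :
    CMDRR n (∑ i, k i) where
  spouses := fillSpouses C
  spouses_card := card_fillSpouses
  spouses_inj1 _ hp _ hq := fillSpouses_inj_fst hp hq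
  spouses_inj2 _ hp _ hq := fillSpouses_inj_snd hp hq
  games := fillGames C H
  valid g hg := by
    rcases Multiset.mem_add.mp hg with hg | hg
    · obtain ⟨p, hp, rfl⟩ := Multiset.mem_map.mp hg
      exact H.crossGame_valid (Finset.mem_filter.mp hp).2.2
    · obtain ⟨i, -, hg⟩ := Multiset.mem_sum.mp hg
      obtain ⟨g', hg', rfl⟩ := Multiset.mem_map.mp hg
      exact ((C i).valid g' hg').map (holeEmb hole i).injective
  no_spouse_game g hg p hp hmw := by
    rcases Game.manIn_and_womanIn_iff.mp hmw with h | h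
    · exact Multiset.countP_eq_zero.mp (countP_fillGames_eq_zero_of_mem_fillSpouses
        Game.isNatural_partners H.countP_crossGames_partners
        (fun i _ => (C i).countP_partners_eq_zero) hp) g hg h
    · exact Multiset.countP_eq_zero.mp (countP_fillGames_eq_zero_of_mem_fillSpouses
        Game.isNatural_opposesMW H.countP_crossGames_opposesMW
        (fun i _ => (C i).countP_opposesMW_eq_zero) hp) g hg h
  partners_once := countP_fillGames_eq_one_of_not_mem_fillSpouses Game.isNatural_partners
    H.countP_crossGames_partners fun i => (C i).partners_once
  opposesMW_once := countP_fillGames_eq_one_of_not_mem_fillSpouses Game.isNatural_opposesMW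
    H.countP_crossGames_opposesMW fun i => (C i).opposesMW_once
  spousedM_opposes := countP_fillGames_eq_one_of_mem Game.isNatural_opposesMM
    H.countP_crossGames_opposesMM (fun _ _ => holeEmb_mem_image_fst_fillSpouses)
    fun i => (C i).spousedM_opposes
  spousedW_opposes := countP_fillGames_eq_one_of_mem Game.isNatural_opposesWW
    H.countP_crossGames_opposesWW (fun _ _ => holeEmb_mem_image_snd_fillSpouses)
    fun i => (C i).spousedW_opposes
  unspousedM_opposes := exists_countP_fillGames_eq_two_of_not_mem Game.isNatural_opposesMM
    H.countP_crossGames_opposesMM (fun _ _ => holeEmb_mem_image_fst_fillSpouses)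
    fun i => (C i).unspousedM_opposes
  unspousedW_opposes := exists_countP_fillGames_eq_two_of_not_mem Game.isNatural_opposesWW
    H.countP_crossGames_opposesWW (fun _ _ => holeEmb_mem_image_snd_fillSpouses)
    fun i => (C i).unspousedW_opposes

theorem cmdrr_fill_hsols_general (n m : ℕ) (hole : Fin n → Fin m)
    (H : HSOLS n m hole) (k : Fin m → ℕ)
    (hk : ∀ i : Fin m,
      Nonempty (CMDRR (Finset.univ.filter (fun x : Fin n => hole x = i)).card (k i))) :
    Nonempty (CMDRR n (∑ i : Fin m, k i)) :=
  ⟨CMDRR.fill H fun i => (hk i).some⟩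

/-- Filling the holes of an HSOLS with CMDRRs yields a CMDRR whose number of
spouse pairs is the sum of those of the ingredients. -/
theorem cmdrr_fill_hsols (n m : ℕ) (hole : Fin n → Fin m)
    (hsurj : Function.Surjective hole) (H : HSOLS n m hole) (k : Fin m → ℕ)
    (hk : ∀ i : Fin m,
      Nonempty (CMDRR (Finset.univ.filter (fun x : Fin n => hole x = i)).card (k i))) :
    Nonempty (CMDRR n (∑ i : Fin m, k i)) :=
  cmdrr_fill_hsols_general n m hole H k hk
end

section
/- For each k ∈ {0, 2, 4, 6} there exists a CMDRR(8,k). -/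
open scoped Classical

/-! The four tournaments are given explicitly, with man `i` married to woman `i` for `i < k`.
Every defining condition quantifies over finitely many players and games, and each game
predicate, evaluated on a concrete game `s(a, b)`, is a condition on `a` and `b` in either
order; this makes all conditions decidable, and the kernel checks them by evaluation. -/

namespace Sym2

variable {α : Type*}

theorem exists_mk_eq_mk_and_iff_s16 {R : α → α → Prop} {x y : α} :
    (∃ a b, s(x, y) = s(a, b) ∧ R a b) ↔ R x y ∨ R y x := by
  constructor
  · rintro ⟨a, b, hab, h⟩
    rcases Sym2.eq_iff.mp hab with ⟨rfl, rfl⟩ | ⟨rfl, rfl⟩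
    exacts [.inl h, .inr h]
  · rintro (h | h)
    exacts [⟨x, y, rfl, h⟩, ⟨y, x, Sym2.eq_swap, h⟩]

instance decidableExistsMkEqAnd (R : α → α → Prop) [DecidableRel R] :
    DecidablePred fun z : Sym2 α => ∃ a b, z = s(a, b) ∧ R a b := fun z =>
  z.recOnSubsingleton fun _ _ => decidable_of_iff' _ exists_mk_eq_mk_and_iff_s16

end Sym2

namespace Game

variable {n : ℕ}

instance : DecidablePred (valid (n := n)) :=
  Sym2.decidableExistsMkEqAnd fun a b : Fin n × Fin n => a.1 ≠ b.1 ∧ a.2 ≠ b.2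

instance (m : Fin n) : DecidablePred (manIn m) :=
  Sym2.decidableExistsMkEqAnd fun a (_ : Fin n × Fin n) => a.1 = m

instance (w : Fin n) : DecidablePred (womanIn w) :=
  Sym2.decidableExistsMkEqAnd fun a (_ : Fin n × Fin n) => a.2 = w

instance (m w : Fin n) : DecidablePred (partners m w) := fun g =>
  inferInstanceAs (Decidable ((m, w) ∈ g))

instance (m w : Fin n) : DecidablePred (opposesMW m w) :=
  Sym2.decidableExistsMkEqAnd fun a b : Fin n × Fin n => a.1 = m ∧ b.2 = w

instance (m m' : Fin n) : DecidablePred (opposesMM m m') :=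
  Sym2.decidableExistsMkEqAnd fun a b : Fin n × Fin n => a.1 = m ∧ b.1 = m'

instance (w w' : Fin n) : DecidablePred (opposesWW w w') :=
  Sym2.decidableExistsMkEqAnd fun a b : Fin n × Fin n => a.2 = w ∧ b.2 = w'

end Game

/-- The conditions of `CMDRR`, with the two that range over all games phrased as game counts,
the form in which the kernel evaluates them quickly. -/
abbrev IsCMDRR {n : ℕ} (k : ℕ) (spouses : Finset (Fin n × Fin n)) (games : Multiset (Game n)) :
    Prop :=
  spouses.card = k ∧
  (∀ p ∈ spouses, ∀ q ∈ spouses, p.1 = q.1 → p = q) ∧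
  (∀ p ∈ spouses, ∀ q ∈ spouses, p.2 = q.2 → p = q) ∧
  games.countP Game.valid = Multiset.card games ∧
  (∀ p ∈ spouses, games.countP (fun g => Game.manIn p.1 g ∧ Game.womanIn p.2 g) = 0) ∧
  (∀ m w : Fin n, (m, w) ∉ spouses → games.countP (Game.partners m w) = 1) ∧
  (∀ m w : Fin n, (m, w) ∉ spouses → games.countP (Game.opposesMW m w) = 1) ∧
  (∀ m ∈ spouses.image Prod.fst, ∀ m' : Fin n, m' ≠ m →
    games.countP (Game.opposesMM m m') = 1) ∧
  (∀ w ∈ spouses.image Prod.snd, ∀ w' : Fin n, w' ≠ w →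
    games.countP (Game.opposesWW w w') = 1) ∧
  (∀ m : Fin n, m ∉ spouses.image Prod.fst →
    ∃ m' : Fin n, m' ≠ m ∧ m' ∉ spouses.image Prod.fst ∧
      games.countP (Game.opposesMM m m') = 2 ∧
      ∀ m'' : Fin n, m'' ≠ m → m'' ≠ m' → games.countP (Game.opposesMM m m'') = 1) ∧
  (∀ w : Fin n, w ∉ spouses.image Prod.snd →
    ∃ w' : Fin n, w' ≠ w ∧ w' ∉ spouses.image Prod.snd ∧
      games.countP (Game.opposesWW w w') = 2 ∧
      ∀ w'' : Fin n, w'' ≠ w → w'' ≠ w' → games.countP (Game.opposesWW w w'') = 1)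

def CMDRR.ofIsCMDRR {n k : ℕ} {spouses : Finset (Fin n × Fin n)} {games : Multiset (Game n)}
    (h : IsCMDRR k spouses games) : CMDRR n k := by
  obtain ⟨card, inj1, inj2, valid, noSpouse, partners, opposesMW, spousedM, spousedW,
    unspousedM, unspousedW⟩ := h
  exact {
    spouses, games
    spouses_card := card
    spouses_inj1 := inj1
    spouses_inj2 := inj2
    valid := Multiset.countP_eq_card.mp valid
    no_spouse_game := fun g hg p hp => Multiset.countP_eq_zero.mp (noSpouse p hp) g hg
    -- the counts in `CMDRR` were elaborated with classical decidability instances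
    partners_once := by convert partners
    opposesMW_once := by convert opposesMW
    spousedM_opposes := by convert spousedM
    spousedW_opposes := by convert spousedW
    unspousedM_opposes := by convert unspousedM
    unspousedW_opposes := by convert unspousedW }

def diagonalSpouses (n k : ℕ) : Finset (Fin n × Fin n) :=
  {p | p.1 = p.2 ∧ p.1.val < k}

def cmdrr8Games0 : List (Game 8) := [
  s((0,0),(7,2)), s((0,1),(5,0)), s((0,2),(4,7)), s((0,3),(6,4)),
  s((0,4),(2,1)), s((0,5),(1,6)), s((0,6),(1,3)), s((0,7),(3,5)),
  s((1,0),(4,4)), s((1,1),(3,7)), s((1,2),(6,1)), s((1,4),(5,2)),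
  s((1,5),(2,0)), s((1,7),(7,3)), s((2,2),(3,3)), s((2,3),(3,0)),
  s((2,4),(7,7)), s((2,5),(6,2)), s((2,6),(4,1)), s((2,7),(5,6)),
  s((3,1),(4,0)), s((3,2),(7,6)), s((3,4),(6,5)), s((3,6),(5,4)),
  s((4,2),(5,3)), s((4,3),(5,5)), s((4,5),(7,4)), s((4,6),(6,7)),
  s((5,1),(7,5)), s((5,7),(6,0)), s((6,3),(7,1)), s((6,6),(7,0))]

def cmdrr8Games2 : List (Game 8) := [
  s((0,1),(2,2)), s((0,2),(7,6)), s((0,3),(4,1)), s((0,4),(5,7)),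
  s((0,5),(1,4)), s((0,6),(6,5)), s((0,7),(3,3)), s((1,0),(7,4)),
  s((1,2),(5,3)), s((1,3),(3,6)), s((1,5),(6,2)), s((1,6),(2,7)),
  s((1,7),(4,0)), s((2,0),(6,3)), s((2,1),(3,0)), s((2,3),(5,5)),
  s((2,4),(4,2)), s((2,5),(7,7)), s((2,6),(3,4)), s((3,1),(7,5)),
  s((3,2),(6,0)), s((3,5),(4,4)), s((3,7),(5,2)), s((4,3),(7,2)),
  s((4,5),(5,0)), s((4,6),(5,1)), s((4,7),(6,6)), s((5,4),(6,1)),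
  s((5,6),(7,0)), s((6,4),(7,3)), s((6,7),(7,1))]

def cmdrr8Games4 : List (Game 8) := [
  s((0,1),(3,5)), s((0,2),(4,1)), s((0,3),(5,7)), s((0,4),(6,6)),
  s((0,5),(7,2)), s((0,6),(2,3)), s((0,7),(1,4)), s((1,0),(5,4)),
  s((1,2),(6,3)), s((1,3),(7,5)), s((1,5),(2,0)), s((1,6),(4,2)),
  s((1,7),(3,6)), s((2,1),(5,3)), s((2,4),(3,1)), s((2,5),(6,4)),
  s((2,6),(7,7)), s((2,7),(4,0)), s((3,0),(7,6)), s((3,2),(5,0)),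
  s((3,4),(4,5)), s((3,7),(6,2)), s((4,3),(6,0)), s((4,4),(7,3)),
  s((4,6),(5,1)), s((4,7),(5,5)), s((5,2),(7,4)), s((5,6),(6,5)),
  s((6,1),(7,0)), s((6,7),(7,1))]

def cmdrr8Games6 : List (Game 8) := [
  s((0,1),(7,2)), s((0,2),(5,7)), s((0,3),(4,1)), s((0,4),(2,6)),
  s((0,5),(3,4)), s((0,6),(1,5)), s((0,7),(6,3)), s((1,0),(6,2)),
  s((1,2),(4,3)), s((1,3),(5,4)), s((1,4),(7,7)), s((1,6),(3,0)),
  s((1,7),(2,5)), s((2,0),(5,3)), s((2,1),(4,6)), s((2,3),(7,5)),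
  s((2,4),(6,0)), s((2,7),(3,1)), s((3,2),(7,4)), s((3,5),(6,1)),
  s((3,6),(5,2)), s((3,7),(4,0)), s((4,2),(6,5)), s((4,5),(7,0)),
  s((4,7),(5,6)), s((5,0),(7,1)), s((5,1),(6,4)), s((6,6),(7,3)),
  s((6,7),(7,6))]

section

set_option synthInstance.maxSize 1024

theorem isCMDRR_cmdrr8Games0 : IsCMDRR 0 (diagonalSpouses 8 0) ↑cmdrr8Games0 := by
  decide +kernel

theorem isCMDRR_cmdrr8Games2 : IsCMDRR 2 (diagonalSpouses 8 2) ↑cmdrr8Games2 := by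
  decide +kernel

theorem isCMDRR_cmdrr8Games4 : IsCMDRR 4 (diagonalSpouses 8 4) ↑cmdrr8Games4 := by
  decide +kernel

theorem isCMDRR_cmdrr8Games6 : IsCMDRR 6 (diagonalSpouses 8 6) ↑cmdrr8Games6 := by
  decide +kernel

end

/-- There exists a CMDRR(8,k) for each k ∈ {0, 2, 4, 6}. -/
theorem cmdrr_8_exists : ∀ k ∈ ({0, 2, 4, 6} : Set ℕ), Nonempty (CMDRR 8 k) := by
  rintro k (rfl | rfl | rfl | rfl)
  exacts [⟨.ofIsCMDRR isCMDRR_cmdrr8Games0⟩, ⟨.ofIsCMDRR isCMDRR_cmdrr8Games2⟩,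
    ⟨.ofIsCMDRR isCMDRR_cmdrr8Games4⟩, ⟨.ofIsCMDRR isCMDRR_cmdrr8Games6⟩]
end
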